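/- arXiv:2410.04412 — 9 statements merged into one kernel-verified Lean document; each statement's English description precedes it below -/
import Mathlib

section
/- For n ≥ 4, the sequence C(n,0), C(n,2), C(n,4), ..., C(n,2i), ... (binomial coefficients at even indices 2i ≤ n) is log-concave: for all i with 2 ≤ 2i and 2i+2 ≤ n, C(n,2i)^2 ≥ C(n,2i-2) · C(n,2i+2). -/
lemma choose_log_concave_step (n m : ℕ) (h : m + 2 ≤ n) :
    n.choose m * n.choose (m + 2) ≤ n.choose (m + 1) ^ 2 := by
  have hA : n.choose (m + 1) * (m + 1) = n.choose m * (n - m) :=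
    Nat.choose_succ_right_eq n m
  have hB : n.choose (m + 2) * (m + 2) = n.choose (m + 1) * (n - (m + 1)) :=
    Nat.choose_succ_right_eq n (m + 1)
  have hpos : 0 < (m + 2) * (n - m) := by
    have : 0 < n - m := by omega
    positivity
  have key : n.choose m * n.choose (m + 2) * ((m + 2) * (n - m)) =
      n.choose (m + 1) ^ 2 * ((m + 1) * (n - (m + 1))) := by
    calc n.choose m * n.choose (m + 2) * ((m + 2) * (n - m))
        = (n.choose m * (n - m)) * (n.choose (m + 2) * (m + 2)) := by ring
      _ = (n.choose (m + 1) * (m + 1)) * (n.choose (m + 1) * (n - (m + 1))) := by rw [← hA, hB]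
      _ = n.choose (m + 1) ^ 2 * ((m + 1) * (n - (m + 1))) := by ring
  have hle : (m + 1) * (n - (m + 1)) ≤ (m + 2) * (n - m) := by
    have h1 : n - (m + 1) ≤ n - m := by omega
    exact Nat.mul_le_mul (by omega) h1
  have : n.choose m * n.choose (m + 2) * ((m + 2) * (n - m)) ≤
      n.choose (m + 1) ^ 2 * ((m + 2) * (n - m)) := by
    rw [key]; exact Nat.mul_le_mul_left _ hle
  exact Nat.le_of_mul_le_mul_right this hpos

/-- For `n ≥ 4`, the even-indexed binomial coefficients form a log-concave sequence. -/
theorem even_binomial_log_concave (n i : ℕ) (hn : 4 ≤ n) (hi : 1 ≤ i)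
    (h : 2 * i + 2 ≤ n) :
    (n.choose (2 * i - 2)) * (n.choose (2 * i + 2)) ≤ (n.choose (2 * i)) ^ 2 := by
  obtain ⟨j, rfl⟩ : ∃ j, i = j + 1 := ⟨i - 1, by omega⟩
  set m := 2 * j with hm
  have e1 : 2 * (j + 1) - 2 = m := by omega
  have e2 : 2 * (j + 1) = m + 2 := by omega
  have e3 : 2 * (j + 1) + 2 = m + 4 := by omega
  rw [e1, e2, show m + 2 + 2 = m + 4 from rfl]
  have s1 : n.choose m * n.choose (m + 2) ≤ n.choose (m + 1) ^ 2 :=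
    choose_log_concave_step n m (by omega)
  have s2 : n.choose (m + 1) * n.choose (m + 3) ≤ n.choose (m + 2) ^ 2 :=
    choose_log_concave_step n (m + 1) (by omega)
  have s3 : n.choose (m + 2) * n.choose (m + 4) ≤ n.choose (m + 3) ^ 2 :=
    choose_log_concave_step n (m + 2) (by omega)
  have hc : 0 < n.choose (m + 2) ^ 2 := by
    have : 0 < n.choose (m + 2) := Nat.choose_pos (by omega)
    positivity
  have big : n.choose m * n.choose (m + 4) * n.choose (m + 2) ^ 2 ≤
      n.choose (m + 2) ^ 2 * n.choose (m + 2) ^ 2 := by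
    calc n.choose m * n.choose (m + 4) * n.choose (m + 2) ^ 2
        = (n.choose m * n.choose (m + 2)) * (n.choose (m + 2) * n.choose (m + 4)) := by ring
      _ ≤ n.choose (m + 1) ^ 2 * n.choose (m + 3) ^ 2 := Nat.mul_le_mul s1 s3
      _ = (n.choose (m + 1) * n.choose (m + 3)) ^ 2 := by ring
      _ ≤ (n.choose (m + 2) ^ 2) ^ 2 := Nat.pow_le_pow_left s2 2
      _ = n.choose (m + 2) ^ 2 * n.choose (m + 2) ^ 2 := by ring
  exact Nat.le_of_mul_le_mul_right big hc
end

section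
/- Let n = 2^m - 1 with m ≥ 4 and define B_w = C(n,w) + (-1)^i n C((n-1)/2, i) if w = 2i, and B_w = C(n,w) - (-1)^i n C((n-1)/2, i) if w = 2i+1. Then B_3^2 ≥ B_4 · B_0, i.e., (C(n,3) + C(n,2))^2 ≥ (n+1)(C(n,4) + n·C((n-1)/2, 2)). -/
lemma aux_c2 (n : ℕ) : 2 * n.choose 2 = n * (n - 1) := by
  have h := Nat.descFactorial_eq_factorial_mul_choose n 2
  simp [Nat.descFactorial, Nat.factorial] at h
  ring_nf at h ⊢
  omega

lemma aux_c3 (n : ℕ) : 6 * n.choose 3 = n * (n - 1) * (n - 2) := by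
  have h := Nat.descFactorial_eq_factorial_mul_choose n 3
  simp [Nat.descFactorial, Nat.factorial] at h
  ring_nf at h ⊢
  omega

lemma aux_c4 (n : ℕ) : 24 * n.choose 4 = n * (n - 1) * (n - 2) * (n - 3) := by
  have h := Nat.descFactorial_eq_factorial_mul_choose n 4
  simp [Nat.descFactorial, Nat.factorial] at h
  ring_nf at h ⊢
  omega

/-- For `n = 2^m - 1` with `m ≥ 4`:
`(C(n,3) + C(n,2))^2 ≥ (n+1)(C(n,4) + n·C((n-1)/2, 2))`,
i.e. `B_3^2 ≥ B_4 · B_0` for the scaled weight distribution of the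
binary Hamming code. -/
theorem hamming_B3_sq_ge_B4_B0 (m : ℕ) (hm : 4 ≤ m) :
    let n : ℕ := 2 ^ m - 1
    (n + 1) * (n.choose 4 + n * ((n - 1) / 2).choose 2) ≤
      (n.choose 3 + n.choose 2) ^ 2 := by
  intro n
  have hpow : 16 ≤ 2 ^ m := by
    calc (16 : ℕ) = 2 ^ 4 := by norm_num
    _ ≤ 2 ^ m := Nat.pow_le_pow_right (by norm_num) hm
  have heven : 2 ∣ 2 ^ m := dvd_pow_self 2 (by omega)
  -- write n = 2*j + 15
  obtain ⟨j, hj⟩ : ∃ j, n = 2 * j + 15 := by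
    obtain ⟨t, ht⟩ := heven
    exact ⟨t - 8, by omega⟩
  rw [hj]
  have hq : (2 * j + 15 - 1) / 2 = j + 7 := by omega
  rw [hq]
  -- abbreviations
  set N := 2 * j + 15 with hN
  have h2 : 2 * N.choose 2 = N * (N - 1) := aux_c2 N
  have h3 : 6 * N.choose 3 = N * (N - 1) * (N - 2) := aux_c3 N
  have h4 : 24 * N.choose 4 = N * (N - 1) * (N - 2) * (N - 3) := aux_c4 N
  have hd : 2 * (j + 7).choose 2 = (j + 7) * (j + 6) := by
    have := aux_c2 (j + 7); simpa using this
  have hN1 : N - 1 = 2 * j + 14 := by omega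
  have hN2 : N - 2 = 2 * j + 13 := by omega
  have hN3 : N - 3 = 2 * j + 12 := by omega
  rw [hN1] at h2 h3 h4
  rw [hN2] at h3 h4
  rw [hN3] at h4
  -- multiply goal by 144
  have key : 144 * ((N + 1) * (N.choose 4 + N * (j + 7).choose 2)) ≤
      144 * ((N.choose 3 + N.choose 2) ^ 2) := by
    have e1 : 144 * ((N + 1) * (N.choose 4 + N * (j + 7).choose 2)) =
        (N + 1) * (6 * (24 * N.choose 4) + 72 * N * (2 * (j + 7).choose 2)) := by ring
    have e2 : 144 * ((N.choose 3 + N.choose 2) ^ 2) =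
        (2 * (6 * N.choose 3) + 6 * (2 * N.choose 2)) ^ 2 := by ring
    rw [e1, e2, h2, h3, h4, hd, hN]
    nlinarith [sq_nonneg j, j.zero_le]
  omega
end

section
/- Let n = 2^m - 1 with m ≥ 7, and let i be even with 2 ≤ i and 2i ≤ n - 4. Then with B_{2i} = C(n,2i) + (-1)^i n C((n-1)/2, i), B_{2i-1} = C(n,2i-1) + (-1)^i n C((n-1)/2, i-1) (using the formula for odd weight 2(i-1)+1 with index i-1), and B_{2i+1} = C(n,2i+1) - (-1)^i n C((n-1)/2, i), we have B_{2i}^2 - B_{2i-1} B_{2i+1} > 0. -/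
private lemma binom_logconcave (n i : ℕ) (h1 : 1 ≤ i) (h2 : 2 * i ≤ n) :
    n.choose (2 * i - 1) * n.choose (2 * i + 1) ≤ n.choose (2 * i) ^ 2 := by
  set A := n.choose (2 * i) with hA
  set a := n.choose (2 * i - 1) with ha
  set b := n.choose (2 * i + 1) with hb
  have e1 : A * (2 * i) = a * (n - 2 * i + 1) := by
    have h := Nat.choose_succ_right_eq n (2 * i - 1)
    have h' : 2 * i - 1 + 1 = 2 * i := by omega
    rw [h'] at h
    have h'' : n - (2 * i - 1) = n - 2 * i + 1 := by omega
    rw [h''] at h; exact h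
  have e2 : b * (2 * i + 1) = A * (n - 2 * i) := Nat.choose_succ_right_eq n (2 * i)
  set s := n - 2 * i with hs
  set t := 2 * i with ht
  have key : a * b * ((t + 1) * (s + 1)) = A ^ 2 * (t * s) := by
    calc a * b * ((t + 1) * (s + 1)) = (a * (s + 1)) * (b * (t + 1)) := by ring
    _ = (A * t) * (A * s) := by rw [← e1, e2]
    _ = A ^ 2 * (t * s) := by ring
  have hle : t * s ≤ (t + 1) * (s + 1) := by nlinarith
  have : a * b * ((t + 1) * (s + 1)) ≤ A ^ 2 * ((t + 1) * (s + 1)) := by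
    rw [key]; exact Nat.mul_le_mul_left _ hle
  exact Nat.le_of_mul_le_mul_right this (by positivity)

private lemma binom_cross (k i : ℕ) (h1 : 1 ≤ i) (h2 : i + 2 ≤ k) :
    k.choose (i - 1) * ((2 * k + 1).choose (2 * i + 1))
      < (2 * k + 1).choose (2 * i) * k.choose i := by
  set A := (2 * k + 1).choose (2 * i) with hA
  set b := (2 * k + 1).choose (2 * i + 1) with hb
  set M := k.choose (i - 1) with hM
  set N := k.choose i with hN
  have e2 : b * (2 * i + 1) = A * (2 * (k - i) + 1) := by
    have h := Nat.choose_succ_right_eq (2 * k + 1) (2 * i)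
    have h' : 2 * k + 1 - 2 * i = 2 * (k - i) + 1 := by omega
    rw [h'] at h; exact h
  have e3 : N * i = M * (k - i + 1) := by
    have h := Nat.choose_succ_right_eq k (i - 1)
    have h' : i - 1 + 1 = i := by omega
    rw [h'] at h
    have h'' : k - (i - 1) = k - i + 1 := by omega
    rw [h''] at h; exact h
  have hApos : 0 < A := Nat.choose_pos (by omega)
  have hNpos : 0 < N := Nat.choose_pos (by omega)
  have key : M * b * ((2 * i + 1) * (k - i + 1)) = A * N * (i * (2 * (k - i) + 1)) := by
    calc M * b * ((2 * i + 1) * (k - i + 1))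
        = (M * (k - i + 1)) * (b * (2 * i + 1)) := by ring
    _ = (N * i) * (A * (2 * (k - i) + 1)) := by rw [← e3, e2]
    _ = A * N * (i * (2 * (k - i) + 1)) := by ring
  have hlt : i * (2 * (k - i) + 1) < (2 * i + 1) * (k - i + 1) := by nlinarith
  have : M * b * ((2 * i + 1) * (k - i + 1)) < A * N * ((2 * i + 1) * (k - i + 1)) := by
    rw [key]; exact mul_lt_mul_of_pos_left hlt (by positivity)
  exact Nat.lt_of_mul_lt_mul_right this

/-- For `n = 2^m - 1` with `m ≥ 7` and even `i` with `2 ≤ i`, `2i ≤ n - 4`: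
with `B_{2i} = C(n,2i) + (-1)^i n C((n-1)/2,i)`,
`B_{2i-1} = C(n,2i-1) + (-1)^i n C((n-1)/2,i-1)` and
`B_{2i+1} = C(n,2i+1) - (-1)^i n C((n-1)/2,i)`,
we have `B_{2i}^2 - B_{2i-1} B_{2i+1} > 0`. -/
theorem hamming_log_concave_step (m i : ℕ) (hm : 7 ≤ m) (hi : Even i)
    (hi2 : 2 ≤ i) (hin : 2 * i ≤ 2 ^ m - 1 - 4) :
    let n : ℕ := 2 ^ m - 1
    let B2i : ℤ := (n.choose (2 * i) : ℤ) + (-1) ^ i * n * (((n - 1) / 2).choose i : ℤ)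
    let B2im1 : ℤ :=
      (n.choose (2 * i - 1) : ℤ) + (-1) ^ i * n * (((n - 1) / 2).choose (i - 1) : ℤ)
    let B2ip1 : ℤ :=
      (n.choose (2 * i + 1) : ℤ) - (-1) ^ i * n * (((n - 1) / 2).choose i : ℤ)
    0 < B2i ^ 2 - B2im1 * B2ip1 := by
  intro n B2i B2im1 B2ip1
  have hsign : ((-1 : ℤ)) ^ i = 1 := hi.neg_one_pow
  have h2m : 2 ^ (m - 1) * 2 = 2 ^ m := by
    rw [← pow_succ]; congr 1; omega
  have hx : 64 ≤ 2 ^ (m - 1) := by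
    calc (64 : ℕ) = 2 ^ 6 := by norm_num
    _ ≤ 2 ^ (m - 1) := Nat.pow_le_pow_right (by norm_num) (by omega)
  set k := (n - 1) / 2 with hk
  have hnk : n = 2 * k + 1 := by
    simp only [hk]
    show 2 ^ m - 1 = 2 * ((2 ^ m - 1 - 1) / 2) + 1
    omega
  have hik : i + 2 ≤ k := by
    have : 2 * i ≤ 2 ^ m - 1 - 4 := hin
    omega
  -- key natural-number facts
  have hlc := binom_logconcave n i (by omega) (by omega)
  have hcr := binom_cross k i (by omega) hik
  rw [← hnk] at hcr
  -- move to ℤ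
  have hlcZ : (n.choose (2 * i - 1) : ℤ) * (n.choose (2 * i + 1) : ℤ)
      ≤ (n.choose (2 * i) : ℤ) ^ 2 := by exact_mod_cast hlc
  have hcrZ : (k.choose (i - 1) : ℤ) * (n.choose (2 * i + 1) : ℤ)
      < (n.choose (2 * i) : ℤ) * (k.choose i : ℤ) := by exact_mod_cast hcr
  have hnpos : (0 : ℤ) < (n : ℤ) := by
    have : 0 < n := by omega
    exact_mod_cast this
  simp only [B2i, B2im1, B2ip1, hsign, one_mul]
  set A := (n.choose (2 * i) : ℤ)
  set a := (n.choose (2 * i - 1) : ℤ)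
  set b := (n.choose (2 * i + 1) : ℤ)
  set M := (k.choose (i - 1) : ℤ)
  set N := (k.choose i : ℤ)
  have hA : 0 ≤ A := by positivity
  have ha : 0 ≤ a := by positivity
  have hb : 0 ≤ b := by positivity
  have hM : 0 ≤ M := by positivity
  have hN : 0 ≤ N := by positivity
  have h1 : (n : ℤ) * (M * b) < (n : ℤ) * (A * N) :=
    mul_lt_mul_of_pos_left hcrZ hnpos
  nlinarith [mul_nonneg (mul_nonneg hnpos.le hnpos.le) (mul_nonneg hN hN),
    mul_nonneg (mul_nonneg hnpos.le hnpos.le) (mul_nonneg hM hN),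
    mul_nonneg (mul_nonneg hnpos.le ha) hN,
    mul_nonneg (mul_nonneg hnpos.le hA) hN]
end

section
/- Let n = 2^m with m ≥ 4 and let i be even with 3 ≤ i ≤ n/4 - 1. Then with B_i = C(n,2i) + (-1)^i (n-1) C(n/2, i), we have B_i^2 / (B_{i-1} B_{i+1}) ≥ C(n,2i)^2 / (C(n,2i-2)·C(n,2i+2)) ≥ 1. -/
/-!
For even `i` the neighbours `i ± 1` are odd, so `B_{i±1} = C(n, 2i ± 2) - (n - 1) C(n/2, i ± 1)`
while `B_i ≥ C(n, 2i)`: the ratio of the `B` dominates the binomial ratio as soon as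
`B_{i±1} > 0`. That positivity comes from Vandermonde, `C(n/2, j)^2 ≤ C(n, 2j)`, together with
`n - 1 < C(n/2, 2) ≤ C(n/2, j)` for `2 ≤ j ≤ n/4`. The binomial ratio is at least `1` by
log-concavity of `k ↦ C(n, k)`.
-/

namespace Nat

theorem choose_le_choose_of_le_of_le_half {n a b : ℕ} (hab : a ≤ b) (hb : b ≤ n / 2) :
    n.choose a ≤ n.choose b := by
  induction b, hab using Nat.le_induction with
  | base => rfl
  | succ b hab ih => exact (ih (by omega)).trans (choose_le_succ_of_lt_half_left (by omega))

theorem choose_mul_choose_le_add_choose (k l i j : ℕ) :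
    k.choose i * l.choose j ≤ (k + l).choose (i + j) := by
  rw [add_choose_eq]
  exact Finset.single_le_sum (f := fun p : ℕ × ℕ => k.choose p.1 * l.choose p.2)
    (fun _ _ => Nat.zero_le _) (Finset.HasAntidiagonal.mem_antidiagonal.mpr rfl : (i, j) ∈ _)

theorem two_mul_sub_one_lt_choose_two {k : ℕ} (hk : 5 ≤ k) : 2 * k - 1 < k.choose 2 := by
  obtain ⟨l, rfl⟩ : ∃ l, k = l + 5 := ⟨k - 5, by omega⟩
  rw [choose_two_right, Nat.lt_iff_add_one_le, Nat.le_div_iff_mul_le two_pos,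
    show 2 * (l + 5) - 1 + 1 = 2 * (l + 5) by omega, show l + 5 - 1 = l + 4 by omega]
  nlinarith

theorem two_mul_sub_one_mul_choose_lt {k j : ℕ} (hk : 5 ≤ k) (hj : 2 ≤ j)
    (hjk : j ≤ k / 2) :
    (2 * k - 1) * k.choose j < (2 * k).choose (2 * j) := by
  have hmono : k.choose 2 ≤ k.choose j := choose_le_choose_of_le_of_le_half hj hjk
  calc (2 * k - 1) * k.choose j
      < k.choose j * k.choose j :=
        Nat.mul_lt_mul_of_pos_right ((two_mul_sub_one_lt_choose_two hk).trans_le hmono)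
          (choose_pos (by omega))
    _ ≤ (2 * k).choose (2 * j) := by
        simpa only [two_mul] using choose_mul_choose_le_add_choose k k j j

theorem choose_mul_choose_add_two_le_sq (n k : ℕ) :
    n.choose k * n.choose (k + 2) ≤ n.choose (k + 1) ^ 2 := by
  rcases lt_or_ge k n with hkn | hnk
  · have e₁ := choose_succ_right_eq n k
    have e₂ : n.choose (k + 2) * (k + 2) = n.choose (k + 1) * (n - (k + 1)) :=
      choose_succ_right_eq n (k + 1)
    have hw : (k + 1) * (n - (k + 1)) ≤ (k + 2) * (n - k) :=
      Nat.mul_le_mul (by omega) (by omega)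
    -- `C(n, k + 1) / C(n, k) = (n - k) / (k + 1)` decreases in `k`
    refine le_of_mul_le_mul_right ?_ (Nat.mul_pos (by omega) (by omega) : 0 < (k + 2) * (n - k))
    calc n.choose k * n.choose (k + 2) * ((k + 2) * (n - k))
        = (n.choose k * (n - k)) * (n.choose (k + 2) * (k + 2)) := by ring
      _ = n.choose (k + 1) ^ 2 * ((k + 1) * (n - (k + 1))) := by rw [← e₁, e₂]; ring
      _ ≤ n.choose (k + 1) ^ 2 * ((k + 2) * (n - k)) := Nat.mul_le_mul_left _ hw
  · rw [choose_eq_zero_of_lt (by omega : n < k + 2), Nat.mul_zero]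
    exact Nat.zero_le _

theorem choose_mul_choose_add_four_le_sq (n k : ℕ) :
    n.choose k * n.choose (k + 4) ≤ n.choose (k + 2) ^ 2 := by
  rcases (n.choose (k + 2)).eq_zero_or_pos with h | h
  · rw [choose_eq_zero_iff] at h
    rw [choose_eq_zero_of_lt (by omega : n < k + 4), Nat.mul_zero]
    exact Nat.zero_le _
  have h₀ := choose_mul_choose_add_two_le_sq n k
  have h₁ := choose_mul_choose_add_two_le_sq n (k + 1)
  have h₂ := choose_mul_choose_add_two_le_sq n (k + 2)
  refine le_of_mul_le_mul_right ?_ (by positivity : 0 < n.choose (k + 2) ^ 2)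
  calc n.choose k * n.choose (k + 4) * n.choose (k + 2) ^ 2
      = (n.choose k * n.choose (k + 2)) * (n.choose (k + 2) * n.choose (k + 4)) := by ring
    _ ≤ n.choose (k + 1) ^ 2 * n.choose (k + 3) ^ 2 := Nat.mul_le_mul h₀ h₂
    _ = (n.choose (k + 1) * n.choose (k + 3)) ^ 2 := by ring
    _ ≤ (n.choose (k + 2) ^ 2) ^ 2 := Nat.pow_le_pow_left h₁ 2
    _ = n.choose (k + 2) ^ 2 * n.choose (k + 2) ^ 2 := by ring

end Nat

/-- `n` times the number of codewords of weight `2 j` in the extended Hamming code of length `n`. -/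
def extHammingB (n j : ℕ) : ℚ :=
  n.choose (2 * j) + (-1) ^ j * ((n : ℚ) - 1) * (n / 2).choose j

theorem choose_le_extHammingB_of_even {n j : ℕ} (hn : 1 ≤ n) (hj : Even j) :
    (n.choose (2 * j) : ℚ) ≤ extHammingB n j := by
  have : (1 : ℚ) ≤ n := by exact_mod_cast hn
  rw [extHammingB, hj.neg_one_pow, one_mul, le_add_iff_nonneg_right]
  positivity

theorem extHammingB_le_choose_of_odd {n j : ℕ} (hn : 1 ≤ n) (hj : Odd j) :
    extHammingB n j ≤ n.choose (2 * j) := by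
  have : (1 : ℚ) ≤ n := by exact_mod_cast hn
  rw [extHammingB, hj.neg_one_pow, add_le_iff_nonpos_right, mul_assoc, neg_one_mul,
    neg_nonpos]
  positivity

theorem extHammingB_pos_of_odd {n j : ℕ} (hn : Even n) (h10 : 10 ≤ n) (hj : Odd j)
    (hj2 : 2 ≤ j) (hjn : j ≤ n / 4) : 0 < extHammingB n j := by
  obtain ⟨k, rfl⟩ := hn
  have hlt : ((2 * k - 1 : ℕ) : ℚ) * k.choose j < (2 * k).choose (2 * j) := by
    exact_mod_cast Nat.two_mul_sub_one_mul_choose_lt (by omega) hj2 (by omega)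
  rw [extHammingB, hj.neg_one_pow, ← two_mul, Nat.mul_div_cancel_left _ two_pos]
  push_cast [Nat.cast_sub (by omega : 1 ≤ 2 * k)] at hlt ⊢
  linarith

/-- For `n = 2^m` with `m ≥ 4` and even `i` with `3 ≤ i ≤ n/4 - 1`:
with `B_i = C(n,2i) + (-1)^i (n-1) C(n/2,i)`,
`B_i^2/(B_{i-1}B_{i+1}) ≥ C(n,2i)^2/(C(n,2i-2)·C(n,2i+2)) ≥ 1`. -/
theorem extended_hamming_even_index_step (m i : ℕ) (hm : 4 ≤ m) (hi : Even i)
    (hi3 : 3 ≤ i) (hin : i ≤ 2 ^ m / 4 - 1) :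
    let n : ℕ := 2 ^ m
    let B : ℕ → ℚ := fun j =>
      (n.choose (2 * j) : ℚ) + (-1) ^ j * ((n : ℚ) - 1) * ((n / 2).choose j : ℚ)
    ((n.choose (2 * i) : ℚ) ^ 2 / ((n.choose (2 * i - 2) : ℚ) * (n.choose (2 * i + 2) : ℚ))
        ≤ B i ^ 2 / (B (i - 1) * B (i + 1))) ∧
    (1 ≤ (n.choose (2 * i) : ℚ) ^ 2 /
        ((n.choose (2 * i - 2) : ℚ) * (n.choose (2 * i + 2) : ℚ))) := by
  intro n B
  change i ≤ n / 4 - 1 at hin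
  have hn : Even n := (Nat.even_pow' (by omega)).mpr even_two
  have h16 : 16 ≤ n := Nat.pow_le_pow_right two_pos hm
  have hi' : Odd (i - 1) := Nat.Even.sub_odd (by omega) hi odd_one
  have hprev_pos := extHammingB_pos_of_odd hn (by omega) hi' (by omega) (by omega)
  have hnext_pos := extHammingB_pos_of_odd hn (by omega) hi.add_one (by omega) (by omega)
  have hprev_le := extHammingB_le_choose_of_odd (n := n) (by omega) hi'
  have hnext_le := extHammingB_le_choose_of_odd (n := n) (by omega) hi.add_one
  rw [show 2 * (i - 1) = 2 * i - 2 by omega] at hprev_le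
  rw [mul_add_one] at hnext_le
  have hlc : n.choose (2 * i - 2) * n.choose (2 * i + 2) ≤ n.choose (2 * i) ^ 2 := by
    simpa only [show 2 * i - 2 + 2 = 2 * i by omega, show 2 * i - 2 + 4 = 2 * i + 2 by omega]
      using Nat.choose_mul_choose_add_four_le_sq n (2 * i - 2)
  have hcur := choose_le_extHammingB_of_even (n := n) (by omega) hi
  refine ⟨div_le_div₀ (by positivity) (pow_le_pow_left₀ (by positivity) hcur 2)
    (mul_pos hprev_pos hnext_pos)
    (mul_le_mul hprev_le hnext_le hnext_pos.le (by positivity)), ?_⟩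
  rw [one_le_div (mul_pos (hprev_pos.trans_le hprev_le) (hnext_pos.trans_le hnext_le))]
  exact_mod_cast hlc
end

section
/- Define f(s, w, q) = Σ_{j=0}^{s} (-1)^j C(w-1, j) q^{-j}. If 0 ≤ s, w ≤ q+1, and either s ≠ 1 or w < q+1, then f(s, w, q) > 0. (For s = 1 and w = q+1, f(1, q+1, q) = 0.) -/
/-!
Put `n = w - 1 ≤ q` and `a j = C(n, j) / q ^ j`. Since `a (j + 1) = a j * (n - j) / (q * (j + 1))`
and `n - j ≤ q * (j + 1)`, the sequence `a` is antitone, so every partial alternating sum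
`a 0 - a 1 + a 2 - ⋯` is nonnegative, and it is positive as soon as one of the first two
pairs `a 0 - a 1 = 1 - n / q`, `a 2 - a 3` is. The first one is positive when `n < q`, the
second one when `n = q ≥ 2`; for `s = 1` and `n = q` the sum is exactly `1 - q / q = 0`.
-/

open Finset

section AlternatingSum

variable {R : Type*} [Ring R]

theorem sum_range_add_two_neg_one_pow_mul (b : ℕ → R) (k : ℕ) :
    ∑ j ∈ range (k + 2), (-1) ^ j * b j =
      b 0 - b 1 + ∑ j ∈ range k, (-1) ^ j * b (j + 2) := by
  rw [sum_range_succ', sum_range_succ']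
  simp only [pow_succ, mul_neg, mul_one, neg_neg, zero_add, pow_zero, neg_mul, one_mul,
    sub_eq_add_neg]
  abel

variable [PartialOrder R] [IsOrderedRing R]

theorem Antitone.alternating_sum_nonneg {b : ℕ → R} (hb : Antitone b) (h0 : 0 ≤ b) :
    ∀ k, 0 ≤ ∑ j ∈ range k, (-1) ^ j * b j
  | 0 => by simp
  | 1 => by simpa using h0 0
  | k + 2 => by
    rw [sum_range_add_two_neg_one_pow_mul]
    have htail := Antitone.alternating_sum_nonneg (b := fun j => b (j + 2))
      (fun i j hij => hb (by omega)) (fun j => h0 (j + 2)) k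
    exact add_nonneg (sub_nonneg.2 (hb zero_le_one)) htail

theorem Antitone.sub_le_alternating_sum {b : ℕ → R} (hb : Antitone b) (h0 : 0 ≤ b) (k : ℕ) :
    b 0 - b 1 ≤ ∑ j ∈ range (k + 1), (-1) ^ j * b j := by
  cases k with
  | zero => simpa using h0 1
  | succ k =>
    rw [sum_range_add_two_neg_one_pow_mul]
    exact le_add_of_nonneg_right <|
      Antitone.alternating_sum_nonneg (fun i j hij => hb (by omega)) (fun j => h0 (j + 2)) k

theorem Antitone.alternating_sum_pos {b : ℕ → R} (hb : Antitone b) (h0 : 0 ≤ b)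
    (h : b 1 < b 0 ∨ b 3 < b 2) (k : ℕ) :
    0 < ∑ j ∈ range (k + 3), (-1) ^ j * b j := by
  rw [sum_range_add_two_neg_one_pow_mul]
  have htail : b 2 - b 3 ≤ ∑ j ∈ range (k + 1), (-1) ^ j * b (j + 2) :=
    Antitone.sub_le_alternating_sum (fun i j hij => hb (by omega)) (fun j => h0 (j + 2)) k
  have h01 : 0 ≤ b 0 - b 1 := sub_nonneg.2 (hb zero_le_one)
  have h23 : 0 ≤ b 2 - b 3 := sub_nonneg.2 (hb (by norm_num))
  rcases h with h | h
  · exact add_pos_of_pos_of_nonneg (sub_pos.2 h) (h23.trans htail)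
  · exact add_pos_of_nonneg_of_pos h01 ((sub_pos.2 h).trans_le htail)

end AlternatingSum

section ChooseDivPow

variable {K : Type*} [Field K]

theorem choose_succ_div_pow_succ [CharZero K] (n q j : ℕ) :
    (n.choose (j + 1) : K) / q ^ (j + 1) =
      n.choose j / q ^ j * ((n - j : ℕ) / (q * (j + 1))) := by
  have h : (n.choose (j + 1) : K) = n.choose j * (n - j : ℕ) / (j + 1) := by
    rw [eq_div_iff (Nat.cast_add_one_ne_zero j)]
    exact_mod_cast Nat.choose_succ_right_eq n j
  rw [h, div_mul_div_comm, div_div]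
  congr 1
  ring

variable [LinearOrder K] [IsStrictOrderedRing K]

theorem antitone_choose_div_pow {n q : ℕ} (hnq : n ≤ q) :
    Antitone fun j => (n.choose j : K) / q ^ j := by
  refine antitone_nat_of_succ_le fun j => ?_
  rw [choose_succ_div_pow_succ]
  refine mul_le_of_le_one_right (by positivity) (div_le_one_of_le₀ ?_ (by positivity))
  exact_mod_cast (Nat.sub_le n j).trans (hnq.trans (Nat.le_mul_of_pos_right q j.succ_pos))

theorem choose_succ_div_pow_succ_lt {n q j : ℕ} (hj : j ≤ n) (h : n - j < q * (j + 1)) :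
    (n.choose (j + 1) : K) / q ^ (j + 1) < n.choose j / q ^ j := by
  have hq : 0 < q := Nat.pos_of_mul_pos_right (Nat.zero_lt_of_lt h)
  have hpos : (0 : K) < n.choose j / q ^ j := by
    have := Nat.choose_pos hj
    positivity
  rw [choose_succ_div_pow_succ]
  refine mul_lt_of_lt_one_right hpos ((div_lt_one (by positivity)).2 ?_)
  exact_mod_cast h

end ChooseDivPow

theorem mds_f_positive_general (s w q : ℕ) (hq : 2 ≤ q) (hwq : w ≤ q + 1) :
    let f : ℕ → ℕ → ℚ := fun s w =>
      ∑ j ∈ Finset.range (s + 1), (-1) ^ j * ((w - 1).choose j : ℚ) * ((q : ℚ) ^ j)⁻¹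
    ((s ≠ 1 ∨ w < q + 1) → 0 < f s w) ∧ f 1 (q + 1) = 0 := by
  intro f
  set n := w - 1
  set a : ℕ → ℚ := fun j => (n.choose j : ℚ) / q ^ j
  have hf : f s w = ∑ j ∈ range (s + 1), (-1) ^ j * a j := by
    simp only [f, a, n, div_eq_mul_inv, mul_assoc]
  refine ⟨fun hs => ?_, ?_⟩
  · rw [hf]
    match s, hs with
    | 0, _ => simp [a]
    | 1, hs =>
      have h10 : a 1 < a 0 := choose_succ_div_pow_succ_lt (Nat.zero_le n) (by omega)
      simpa [sum_range_succ, ← sub_eq_add_neg] using h10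
    | k + 2, _ =>
      refine (antitone_choose_div_pow (by omega)).alternating_sum_pos (fun j => by positivity) ?_ k
      rcases (show n ≤ q by omega).lt_or_eq with hn | hn
      · exact Or.inl (choose_succ_div_pow_succ_lt (Nat.zero_le n) (by omega))
      · exact Or.inr (choose_succ_div_pow_succ_lt (by omega) (by omega))
  · have hq0 : (q : ℚ) ≠ 0 := by positivity
    simp [f, sum_range_succ, hq0]

/-- With `f(s,w,q) = Σ_{j=0}^{s} (-1)^j C(w-1,j) q^{-j}`: if `w ≤ q+1` and
either `s ≠ 1` or `w < q+1`, then `f(s,w,q) > 0`; and `f(1,q+1,q) = 0`. -/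
theorem mds_f_positive (s w q : ℕ) (hw : 1 ≤ w) (hq : 2 ≤ q) (hwq : w ≤ q + 1) :
    let f : ℕ → ℕ → ℚ := fun s w =>
      ∑ j ∈ Finset.range (s + 1), (-1) ^ j * ((w - 1).choose j : ℚ) * ((q : ℚ) ^ j)⁻¹
    ((s ≠ 1 ∨ w < q + 1) → 0 < f s w) ∧ f 1 (q + 1) = 0 :=
  mds_f_positive_general s w q hq hwq
end

section
/- Define f(s, w, q) = Σ_{j=0}^{s} (-1)^j C(w-1, j) q^{-j} and g(s, w, q) = f(s,w,q)^2 / (f(s-1, w-1, q)·f(s+1, w+1, q)). If s ≥ 2 is even and the denominators are positive (which holds for s ≤ k-1, w ≤ q+1 except degenerate cases), then g(s, w, q) > 1. -/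
open Finset

lemma F_rec (q : ℕ) (hq : 2 ≤ q) (m s : ℕ) :
    ∑ j ∈ Finset.range (s+2), (-1)^j * (((m+1).choose j : ℚ)) * ((q:ℚ)^j)⁻¹
    = (1 - 1/q) * ∑ j ∈ Finset.range (s+1), (-1)^j * ((m.choose j : ℚ)) * ((q:ℚ)^j)⁻¹
      + (-1)^(s+1) * ((m.choose (s+1) : ℚ)) * ((q:ℚ)^(s+1))⁻¹ := by
  have hq0 : (q:ℚ) ≠ 0 := by positivity
  induction s with
  | zero =>
    simp [Finset.sum_range_succ]
    field_simp
    ring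
  | succ n ih =>
    rw [Finset.sum_range_succ, ih, Finset.sum_range_succ (n := n+1)]
    have h : (((m+1).choose (n+2) : ℚ)) = m.choose (n+1) + m.choose (n+2) := by
      rw [Nat.choose_succ_succ]
      push_cast; ring
    rw [h]
    field_simp
    ring

/-- With `f(s,w,q) = Σ_{j=0}^{s} (-1)^j C(w-1,j) q^{-j}` and
`g(s,w,q) = f(s,w,q)^2/(f(s-1,w-1,q)·f(s+1,w+1,q))`: if `s ≥ 2` is even,
`w ≥ s+2`, and the denominators are positive, then `g(s,w,q) > 1`. -/
theorem mds_g_gt_one (s w q : ℕ) (hq : 2 ≤ q) (hs : Even s) (hs2 : 2 ≤ s)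
    (hw : s + 2 ≤ w) :
    let f : ℕ → ℕ → ℚ := fun s w =>
      ∑ j ∈ Finset.range (s + 1), (-1) ^ j * ((w - 1).choose j : ℚ) * ((q : ℚ) ^ j)⁻¹
    0 < f (s - 1) (w - 1) →
    0 < f (s + 1) (w + 1) →
    1 < f s w ^ 2 / (f (s - 1) (w - 1) * f (s + 1) (w + 1)) := by
  intro f hA hB
  have hf : ∀ a b, f a b
      = ∑ j ∈ Finset.range (a + 1), (-1) ^ j * ((b - 1).choose j : ℚ) * ((q : ℚ) ^ j)⁻¹ :=
    fun _ _ => rfl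
  have hqQ : (2:ℚ) ≤ (q:ℚ) := by exact_mod_cast hq
  have hq1 : (0:ℚ) < 1 - 1/q := by
    have h1 : (1:ℚ)/q < 1 := by
      rw [div_lt_one (by linarith)]; linarith
    linarith
  have e1 : f (s+1) (w+1)
      = (1-1/q) * f s w + (-1)^(s+1) * (((w-1).choose (s+1) : ℚ)) * ((q:ℚ)^(s+1))⁻¹ := by
    have h := F_rec q hq (w-1) s
    rw [show (w-1)+1 = w+1-1 from by omega] at h
    rw [hf, hf]
    exact h
  have e2 : f s w
      = (1-1/q) * f (s-1) (w-1) + (-1)^s * (((w-2).choose s : ℚ)) * ((q:ℚ)^s)⁻¹ := by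
    have h := F_rec q hq (w-2) (s-1)
    rw [show (w-2)+1 = w-1 from by omega, show s-1+2 = s+1 from by omega,
        show s-1+1 = s from by omega] at h
    rw [hf, hf, show w-1-1 = w-2 from by omega, show s-1+1 = s from by omega]
    exact h
  have hc1 : (0:ℚ) < ((w-1).choose (s+1) : ℚ) := by
    exact_mod_cast Nat.choose_pos (show s+1 ≤ w-1 by omega)
  have hc2 : (0:ℚ) < ((w-2).choose s : ℚ) := by
    exact_mod_cast Nat.choose_pos (show s ≤ w-2 by omega)
  have hqp : (0:ℚ) < ((q:ℚ)^(s+1))⁻¹ := by positivity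
  have hqp2 : (0:ℚ) < ((q:ℚ)^s)⁻¹ := by positivity
  have hneg : ((-1:ℚ))^(s+1) = -1 := (hs.add_one).neg_one_pow
  have hpos : ((-1:ℚ))^s = 1 := hs.neg_one_pow
  have hB' : f (s+1) (w+1) < (1-1/q) * f s w := by
    rw [e1, hneg]; nlinarith [mul_pos hc1 hqp]
  have hX' : (1-1/q) * f (s-1) (w-1) < f s w := by
    rw [e2, hpos]; nlinarith [mul_pos hc2 hqp2]
  have hX : 0 < f s w := lt_trans (by positivity) hX'
  have key : f (s-1) (w-1) * f (s+1) (w+1) < f s w ^ 2 := by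
    calc f (s-1) (w-1) * f (s+1) (w+1)
        < f (s-1) (w-1) * ((1-1/q) * f s w) := mul_lt_mul_of_pos_left hB' hA
      _ = ((1-1/q) * f (s-1) (w-1)) * f s w := by ring
      _ < f s w * f s w := mul_lt_mul_of_pos_right hX' hX
      _ = f s w ^ 2 := by ring
  rw [lt_div_iff₀ (mul_pos hA hB)]
  linarith
end

section
/- Every [n, k, d]_q MDS code with k ≥ 3 satisfies A_d^2 ≥ A_0 · A_{d+1}, i.e., (q-1)·C(n, n-k+1)^2 > C(n, n-k+2)·(q - n + k - 1) when q ≥ n - k + 1. -/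
private lemma mds_aux (n k q d : ℕ) (hk : 3 ≤ k) (hkn : k ≤ n)
    (hq : 2 ≤ q) (hqd : d ≤ q) (hd : d = n - k + 1) :
    (n.choose (d + 1) : ℤ) * ((q : ℤ) - (d : ℤ)) <
      ((q : ℤ) - 1) * (n.choose d : ℤ) ^ 2 := by
  have hk1 : 1 ≤ k := by omega
  have hnd : n - d = k - 1 := by omega
  have hdn : d = n - (k - 1) := by omega
  have hC : n.choose (d + 1) * (d + 1) = n.choose d * (k - 1) := by
    rw [Nat.choose_succ_right_eq, hnd]
  have hsymm : n.choose d = n.choose (k - 1) := by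
    rw [hdn, Nat.choose_symm (by omega)]
  have hkA : k ≤ n.choose d := by
    rw [hsymm]
    calc k = k.choose (k - 1) := by
            rw [← Nat.choose_symm (by omega)]
            simp [Nat.sub_sub_self hk1]
      _ ≤ n.choose (k - 1) := Nat.choose_le_choose _ hkn
  have hA : (k : ℤ) ≤ (n.choose d : ℤ) := by exact_mod_cast hkA
  have hB : (n.choose (d + 1) : ℤ) * ((d : ℤ) + 1) = (n.choose d : ℤ) * ((k : ℤ) - 1) := by
    have := hC
    push_cast [Nat.cast_sub hk1] at *
    exact_mod_cast this
  have hd1 : (1 : ℤ) ≤ (d : ℤ) := by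
    have : 1 ≤ d := by omega
    exact_mod_cast this
  have hBle : (n.choose (d + 1) : ℤ) ≤ (n.choose d : ℤ) * ((k : ℤ) - 1) := by
    nlinarith [Int.ofNat_nonneg (n.choose (d + 1))]
  have hqd' : ((d : ℤ)) ≤ (q : ℤ) := by exact_mod_cast hqd
  have hq' : (2 : ℤ) ≤ (q : ℤ) := by exact_mod_cast hq
  have hk' : (3 : ℤ) ≤ (k : ℤ) := by exact_mod_cast hk
  have hA0 : (0 : ℤ) < (n.choose d : ℤ) := by linarith
  have h1 := mul_le_mul_of_nonneg_right hBle (sub_nonneg.mpr hqd')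
  have h2 : ((n.choose d : ℤ)) * ((k : ℤ) - 1) * ((q : ℤ) - (d : ℤ)) ≤
      ((n.choose d : ℤ)) * ((k : ℤ) - 1) * ((q : ℤ) - 1) := by
    apply mul_le_mul_of_nonneg_left (by linarith)
    nlinarith
  have h3 : ((n.choose d : ℤ)) * ((k : ℤ) - 1) * ((q : ℤ) - 1) <
      ((q : ℤ) - 1) * (n.choose d : ℤ) ^ 2 := by
    nlinarith [mul_pos (show (0:ℤ) < (q:ℤ) - 1 by linarith)
      (mul_pos hA0 (show (0:ℤ) < (n.choose d : ℤ) - ((k:ℤ) - 1) by linarith))]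
  linarith

/-- For every `[n,k,d]_q` MDS code with `k ≥ 3` (where `d = n-k+1`),
`A_d^2 > A_0 · A_{d+1}`; explicitly,
`(q-1)·C(n, n-k+1)^2 > C(n, n-k+2)·(q - n + k - 1)` when `q ≥ n - k + 1`. -/
theorem mds_first_log_concave_step (n k q : ℕ) (hk : 3 ≤ k) (hkn : k ≤ n)
    (hq : 2 ≤ q) (hqd : n - k + 1 ≤ q) :
    (n.choose (n - k + 2) : ℤ) * ((q : ℤ) - (n : ℤ) + (k : ℤ) - 1) <
      ((q : ℤ) - 1) * (n.choose (n - k + 1) : ℤ) ^ 2 := by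
  have h := mds_aux n k q (n - k + 1) hk hkn hq hqd rfl
  have h2 : n - k + 1 + 1 = n - k + 2 := by omega
  have h3 : ((n - k + 1 : ℕ) : ℤ) = (n : ℤ) - (k : ℤ) + 1 := by
    push_cast [Nat.cast_sub hkn]; ring
  rw [h2, h3] at h
  convert h using 2
  ring
end

section
/- The second order binary Reed-Muller code R(2,m) with m ≥ 2 has unimodal nonzero weight distribution with largest term A_{2^{m-1}}; in particular, for 1 ≤ j ≤ floor(m/2) - 1, the ratio A_{2^{m-1} - 2^{m-j-2}} / A_{2^{m-1} - 2^{m-j-1}} equals (2^{2j+2}/(2^{2j+2}-1))·(2^{m-2j-1}-1)·(2^{m-2j}-1) ≥ 1, where A_{2^{m-1} - 2^{m-j-1}} = 2^{j^2+j} · (∏_{i=m-2j+1}^{m} (2^i - 1)) / (∏_{i=1}^{j} (2^{2i} - 1)). -/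
/-!
Passing from `j` to `j + 1` multiplies the power of two by `2^{2j+2}`, the denominator by
`2^{2j+2} - 1` and the numerator by the two new factors `(2^{m-2j-1} - 1)(2^{m-2j} - 1)`.
Once `2j + 2 ≤ m` each of the three factors of the ratio is at least `1`.
-/

open Finset

theorem Finset.prod_Icc_eq_mul_prod_Icc_succ {M : Type*} [CommMonoid M] (f : ℕ → M) {a b : ℕ}
    (h : a ≤ b) : ∏ i ∈ Icc a b, f i = f a * ∏ i ∈ Icc (a + 1) b, f i := by
  rw [← mul_prod_Ioc_eq_prod_Icc h, Icc_add_one_left_eq_Ioc]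

theorem one_le_two_pow_sub_one {R : Type*} [Ring R] [PartialOrder R] [IsOrderedRing R]
    {n : ℕ} (hn : n ≠ 0) : (1 : R) ≤ 2 ^ n - 1 := by
  rw [le_sub_iff_add_le, one_add_one_eq_two]
  exact le_self_pow₀ one_le_two hn

theorem one_le_div_sub_one {K : Type*} [Field K] [LinearOrder K] [IsStrictOrderedRing K]
    {x : K} (hx : 1 < x) : 1 ≤ x / (x - 1) := by
  rw [le_div_iff₀ (sub_pos.mpr hx)]
  linarith

def rm2SideFrequency (m j : ℕ) : ℚ :=
  2 ^ (j ^ 2 + j) * (∏ i ∈ Icc (m - 2 * j + 1) m, ((2 : ℚ) ^ i - 1)) /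
    ∏ i ∈ Icc 1 j, ((2 : ℚ) ^ (2 * i) - 1)

def rm2SideRatio (m j : ℕ) : ℚ :=
  ((2 : ℚ) ^ (2 * j + 2) / ((2 : ℚ) ^ (2 * j + 2) - 1)) *
    ((2 : ℚ) ^ (m - 2 * j - 1) - 1) * ((2 : ℚ) ^ (m - 2 * j) - 1)

theorem rm2SideFrequency_pos (m j : ℕ) : 0 < rm2SideFrequency m j := by
  have hpos {n : ℕ} (hn : n ≠ 0) : (0 : ℚ) < 2 ^ n - 1 :=
    zero_lt_one.trans_le (one_le_two_pow_sub_one hn)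
  refine div_pos (mul_pos (by positivity) (prod_pos fun i hi => hpos ?_))
    (prod_pos fun i hi => hpos ?_) <;> grind

theorem one_le_rm2SideRatio {m j : ℕ} (h : 2 * j + 2 ≤ m) : 1 ≤ rm2SideRatio m j :=
  one_le_mul_of_one_le_of_one_le
    (one_le_mul_of_one_le_of_one_le (one_le_div_sub_one (one_lt_pow₀ one_lt_two (by omega)))
      (one_le_two_pow_sub_one (by omega)))
    (one_le_two_pow_sub_one (by omega))

theorem rm2SideFrequency_succ {m j : ℕ} (h : 2 * j + 2 ≤ m) :
    rm2SideFrequency m (j + 1) = rm2SideRatio m j * rm2SideFrequency m j := by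
  have hlow : m - 2 * (j + 1) + 1 = m - 2 * j - 1 := by omega
  have hnum : ∏ i ∈ Icc (m - 2 * j - 1) m, ((2 : ℚ) ^ i - 1) =
      ((2 : ℚ) ^ (m - 2 * j - 1) - 1) * ((2 : ℚ) ^ (m - 2 * j) - 1) *
        ∏ i ∈ Icc (m - 2 * j + 1) m, ((2 : ℚ) ^ i - 1) := by
    rw [prod_Icc_eq_mul_prod_Icc_succ _ (by omega), show m - 2 * j - 1 + 1 = m - 2 * j by omega,
      prod_Icc_eq_mul_prod_Icc_succ _ (by omega), mul_assoc]
  have hden : ∏ i ∈ Icc 1 (j + 1), ((2 : ℚ) ^ (2 * i) - 1) =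
      (∏ i ∈ Icc 1 j, ((2 : ℚ) ^ (2 * i) - 1)) * ((2 : ℚ) ^ (2 * j + 2) - 1) := by
    rw [prod_Icc_succ_top (by omega), mul_add_one]
  unfold rm2SideFrequency rm2SideRatio
  rw [hlow, hnum, hden]
  field_simp
  ring

theorem rm2_side_frequencies_increasing_general (m j : ℕ) (hm : 2 ≤ m)
    (hjm : j ≤ m / 2 - 1) :
    let A : ℕ → ℚ := fun j =>
      2 ^ (j ^ 2 + j) * (∏ i ∈ Finset.Icc (m - 2 * j + 1) m, ((2 : ℚ) ^ i - 1)) /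
        ∏ i ∈ Finset.Icc 1 j, ((2 : ℚ) ^ (2 * i) - 1)
    (A (j + 1) / A j =
      ((2 : ℚ) ^ (2 * j + 2) / ((2 : ℚ) ^ (2 * j + 2) - 1)) *
        ((2 : ℚ) ^ (m - 2 * j - 1) - 1) * ((2 : ℚ) ^ (m - 2 * j) - 1)) ∧
    1 ≤ ((2 : ℚ) ^ (2 * j + 2) / ((2 : ℚ) ^ (2 * j + 2) - 1)) *
        ((2 : ℚ) ^ (m - 2 * j - 1) - 1) * ((2 : ℚ) ^ (m - 2 * j) - 1) := by
  have h : 2 * j + 2 ≤ m := by omega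
  refine ⟨?_, one_le_rm2SideRatio h⟩
  change rm2SideFrequency m (j + 1) / rm2SideFrequency m j = rm2SideRatio m j
  rw [rm2SideFrequency_succ h, mul_div_cancel_right₀ _ (rm2SideFrequency_pos m j).ne']

/-- Increasing-ratio (unimodality) property of the side-lobe frequencies of the
second order Reed–Muller code `R(2,m)`, `m ≥ 2`: with
`A_j = 2^{j²+j}·(∏_{i=m-2j+1}^{m}(2^i-1))/(∏_{i=1}^{j}(2^{2i}-1))`
(the number of codewords of weight `2^{m-1} - 2^{m-j-1}`), for all
`1 ≤ j ≤ ⌊m/2⌋ - 1` the ratio `A_{j+1}/A_j` equals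
`(2^{2j+2}/(2^{2j+2}-1))·(2^{m-2j-1}-1)·(2^{m-2j}-1)` and is `≥ 1`. -/
theorem rm2_side_frequencies_increasing (m j : ℕ) (hm : 2 ≤ m) (hj : 1 ≤ j)
    (hjm : j ≤ m / 2 - 1) :
    let A : ℕ → ℚ := fun j =>
      2 ^ (j ^ 2 + j) * (∏ i ∈ Finset.Icc (m - 2 * j + 1) m, ((2 : ℚ) ^ i - 1)) /
        ∏ i ∈ Finset.Icc 1 j, ((2 : ℚ) ^ (2 * i) - 1)
    (A (j + 1) / A j =
      ((2 : ℚ) ^ (2 * j + 2) / ((2 : ℚ) ^ (2 * j + 2) - 1)) *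
        ((2 : ℚ) ^ (m - 2 * j - 1) - 1) * ((2 : ℚ) ^ (m - 2 * j) - 1)) ∧
    1 ≤ ((2 : ℚ) ^ (2 * j + 2) / ((2 : ℚ) ^ (2 * j + 2) - 1)) *
        ((2 : ℚ) ^ (m - 2 * j - 1) - 1) * ((2 : ℚ) ^ (m - 2 * j) - 1) :=
  rm2_side_frequencies_increasing_general m j hm hjm
end

section
/- Define A_j = 2^{j^2+j} · (∏_{i=m-2j+1}^{m} (2^i - 1)) / (∏_{i=1}^{j} (2^{2i} - 1)) for 1 ≤ j ≤ floor(m/2), m ≥ 6. Then for 2 ≤ j ≤ floor(m/2) - 1, A_{j+1} · A_{j-1} ≤ A_j^2 (log-concavity of the side-lobe frequencies of R(2,m)). -/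
/-!
Writing `A_{j+1} = A_j · r_j`, log-concavity is the statement that the ratios `r_j` decrease.
Here `r_j = 4^{j+1}/(4^{j+1}-1) · (2^{m-2j-1}-1)(2^{m-2j}-1)`, and both factors decrease in `j`:
the first because `x ↦ x/(x-1)` is antitone on `(1, ∞)`, the second because its exponents do.
-/

open Finset

theorem mul_le_sq_of_ratio_succ_le {R : Type*} [CommSemiring R] [PartialOrder R]
    [IsOrderedRing R] {A r : ℕ → R} {k : ℕ} (hA₀ : 0 ≤ A k) (hA₁ : 0 ≤ A (k + 1))
    (h₁ : A (k + 1) = A k * r k) (h₂ : A (k + 2) = A (k + 1) * r (k + 1))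
    (hr : r (k + 1) ≤ r k) :
    A (k + 2) * A k ≤ A (k + 1) ^ 2 :=
  calc A (k + 2) * A k = r (k + 1) * (A (k + 1) * A k) := by rw [h₂]; ring
    _ ≤ r k * (A (k + 1) * A k) := mul_le_mul_of_nonneg_right hr (mul_nonneg hA₁ hA₀)
    _ = A (k + 1) ^ 2 := by rw [sq, h₁]; ring

theorem div_sub_one_le_div_sub_one {K : Type*} [Field K] [LinearOrder K] [IsStrictOrderedRing K]
    {x y : K} (hx : 1 < x) (hxy : x ≤ y) : y / (y - 1) ≤ x / (x - 1) := by
  rw [div_le_div_iff₀ (by linarith) (by linarith)]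
  linarith

/-- The frequency `A_j` of the weight `2^{m-1} - 2^{m-j-1}` in `R(2,m)`. -/
def rm2SideFreq (m j : ℕ) : ℚ :=
  2 ^ (j ^ 2 + j) * (∏ i ∈ Icc (m - 2 * j + 1) m, ((2 : ℚ) ^ i - 1)) /
    ∏ i ∈ Icc 1 j, ((2 : ℚ) ^ (2 * i) - 1)

def rm2SideFreqRatio (m j : ℕ) : ℚ :=
  4 ^ (j + 1) / (4 ^ (j + 1) - 1) * ((2 ^ (m - 2 * j - 1) - 1) * (2 ^ (m - 2 * j) - 1))

theorem rm2SideFreq_pos (m j : ℕ) : 0 < rm2SideFreq m j := by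
  unfold rm2SideFreq
  refine div_pos (mul_pos (by positivity) (prod_pos fun i hi => ?_)) (prod_pos fun i hi => ?_)
  all_goals
    rw [mem_Icc] at hi
    exact sub_pos.2 (one_lt_pow₀ one_lt_two (by omega))

theorem rm2SideFreq_succ {m j : ℕ} (h : 2 * j + 2 ≤ m) :
    rm2SideFreq m (j + 1) = rm2SideFreq m j * rm2SideFreqRatio m j := by
  obtain ⟨n, rfl⟩ : ∃ n, m = n + 2 * j + 2 := ⟨m - 2 * j - 2, by omega⟩
  have hlow : n + 2 * j + 2 - 2 * (j + 1) + 1 = n + 1 := by omega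
  have hmid : n + 2 * j + 2 - 2 * j + 1 = n + 3 := by omega
  have hpeel : ∏ i ∈ Icc (n + 1) (n + 2 * j + 2), ((2 : ℚ) ^ i - 1) =
      (2 ^ (n + 1) - 1) * ((2 ^ (n + 2) - 1) *
        ∏ i ∈ Icc (n + 3) (n + 2 * j + 2), ((2 : ℚ) ^ i - 1)) := by
    rw [← insert_Icc_add_one_left_eq_Icc (by omega), prod_insert (by simp),
      ← insert_Icc_add_one_left_eq_Icc (by omega), prod_insert (by simp)]
    rfl
  have hfour (i : ℕ) : (2 : ℚ) ^ (2 * i) = 4 ^ i := by rw [pow_mul]; norm_num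
  have hden : (4 : ℚ) ^ (j + 1) - 1 ≠ 0 := (sub_pos.2 (one_lt_pow₀ (by norm_num) (by omega))).ne'
  have hprod : ∏ i ∈ Icc 1 j, ((2 : ℚ) ^ (2 * i) - 1) ≠ 0 :=
    prod_ne_zero_iff.2 fun i hi => (sub_pos.2 (one_lt_pow₀ one_lt_two (by grind))).ne'
  unfold rm2SideFreq rm2SideFreqRatio
  rw [hlow, hmid, hpeel, prod_Icc_succ_top (a := 1) (b := j) (by omega), hfour (j + 1),
    show (j + 1) ^ 2 + (j + 1) = j ^ 2 + j + 2 * (j + 1) by ring, pow_add, hfour,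
    show n + 2 * j + 2 - 2 * j - 1 = n + 1 by omega, show n + 2 * j + 2 - 2 * j = n + 2 by omega]
  field_simp

theorem rm2SideFreqRatio_succ_le (m k : ℕ) : rm2SideFreqRatio m (k + 1) ≤ rm2SideFreqRatio m k := by
  have hpow {a b : ℕ} (hab : a ≤ b) : (2 : ℚ) ^ a - 1 ≤ 2 ^ b - 1 :=
    sub_le_sub_right (pow_le_pow_right₀ one_le_two hab) 1
  have hnonneg (a : ℕ) : (0 : ℚ) ≤ 2 ^ a - 1 := sub_nonneg.2 (one_le_pow₀ one_le_two)
  have hone : (1 : ℚ) < 4 ^ (k + 1) := one_lt_pow₀ (by norm_num) (by omega)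
  unfold rm2SideFreqRatio
  exact mul_le_mul
    (div_sub_one_le_div_sub_one hone (pow_le_pow_right₀ (by norm_num) (by omega)))
    (mul_le_mul (hpow (by omega)) (hpow (by omega)) (hnonneg _) (hnonneg _))
    (mul_nonneg (hnonneg _) (hnonneg _))
    (div_nonneg (by positivity) (by linarith))

theorem rm2_side_frequencies_log_concave_general (m j : ℕ) (hj : 2 ≤ j)
    (hjm : j ≤ m / 2 - 1) :
    let A : ℕ → ℚ := fun j =>
      2 ^ (j ^ 2 + j) * (∏ i ∈ Finset.Icc (m - 2 * j + 1) m, ((2 : ℚ) ^ i - 1)) /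
        ∏ i ∈ Finset.Icc 1 j, ((2 : ℚ) ^ (2 * i) - 1)
    A (j + 1) * A (j - 1) ≤ A j ^ 2 := by
  obtain ⟨k, rfl⟩ : ∃ k, j = k + 1 := ⟨j - 1, by omega⟩
  show rm2SideFreq m (k + 2) * rm2SideFreq m k ≤ rm2SideFreq m (k + 1) ^ 2
  exact mul_le_sq_of_ratio_succ_le (rm2SideFreq_pos m k).le (rm2SideFreq_pos m (k + 1)).le
    (rm2SideFreq_succ (by omega)) (rm2SideFreq_succ (by omega)) (rm2SideFreqRatio_succ_le m k)

/-- Log-concavity of the side-lobe frequencies of the second order Reed–Muller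
code `R(2,m)`, `m ≥ 6`: with
`A_j = 2^{j²+j}·(∏_{i=m-2j+1}^{m}(2^i-1))/(∏_{i=1}^{j}(2^{2i}-1))`,
for all `2 ≤ j ≤ ⌊m/2⌋ - 1` we have `A_{j+1}·A_{j-1} ≤ A_j²`. -/
theorem rm2_side_frequencies_log_concave (m j : ℕ) (hm : 6 ≤ m) (hj : 2 ≤ j)
    (hjm : j ≤ m / 2 - 1) :
    let A : ℕ → ℚ := fun j =>
      2 ^ (j ^ 2 + j) * (∏ i ∈ Finset.Icc (m - 2 * j + 1) m, ((2 : ℚ) ^ i - 1)) /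
        ∏ i ∈ Finset.Icc 1 j, ((2 : ℚ) ^ (2 * i) - 1)
    A (j + 1) * A (j - 1) ≤ A j ^ 2 :=
  rm2_side_frequencies_log_concave_general m j hj hjm
end
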